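/- Let n ≥ 2 be an integer. If N(M_{n,α}) is a rational prime, then n is prime. -/

import Mathlib

/-- `α = 2 + √2` in `ℤ√2`. -/
def alphaZ : ℤ√2 := 2 + Zsqrtd.sqrtd

/-- The Mersenne number `M_{n,α} = (α^n - 1)/(α - 1) = (α^n - 1)·(√2 - 1)` in `ℤ√2`,
where `α = 2 + √2` (note `(α - 1)⁻¹ = (1 + √2)⁻¹ = √2 - 1`). -/
def Mers (n : ℕ) : ℤ√2 := (alphaZ ^ n - 1) * (Zsqrtd.sqrtd - 1)

/-- `v n` is the rational part of `(1 + √2)^n`, i.e. `(1+√2)^n = v n + (w n)·√2`. -/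
def vCoeff (n : ℕ) : ℤ := (((1 + Zsqrtd.sqrtd : ℤ√2)) ^ n).re

/-- `w n` is the coefficient of `√2` in `(1 + √2)^n`, i.e. `(1+√2)^n = v n + (w n)·√2`. -/
def wCoeff (n : ℕ) : ℤ := (((1 + Zsqrtd.sqrtd : ℤ√2)) ^ n).im

/-! A strictly increasing divisibility sequence of integers with positive first term takes
composite (or unit) values at composite indices: for `n = m * k` with `1 < m < n` the value
`f m` is a proper divisor of `f n`, strictly between `1` and `f n`. Here `f n = N(M_{n,α})`,
and `N(M_{n,α}) = 2 Re(αⁿ) - 2ⁿ - 1` grows because `Re(αⁿ) ≥ 2ⁿ`. -/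

theorem Nat.prime_of_prime_apply_of_strictMono {f : ℕ → ℤ} (hmono : StrictMono f)
    (hpos : 0 < f 1) (hdvd : ∀ {a b : ℕ}, a ∣ b → f a ∣ f b) {n : ℕ} (hn : 2 ≤ n)
    (hprime : _root_.Prime (f n)) : n.Prime := by
  by_contra hn_not_prime
  obtain ⟨m, hmn, hm_two, hm_lt⟩ := Nat.exists_dvd_of_not_prime2 hn hn_not_prime
  have hm_gt_one : 1 < f m := hpos.trans_lt (hmono (by omega))
  have hm_lt_n : f m < f n := hmono hm_lt
  have hp : (f n).natAbs.Prime := Int.prime_iff_natAbs_prime.mp hprime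
  rcases hp.eq_one_or_self_of_dvd _ (Int.natAbs_dvd_natAbs.mpr (hdvd hmn)) with h | h <;> omega

lemma alphaZ_pow_succ_re (n : ℕ) :
    (alphaZ ^ (n + 1)).re = 2 * (alphaZ ^ n).re + 2 * (alphaZ ^ n).im := by
  rw [pow_succ, Zsqrtd.re_mul]
  simp [alphaZ, mul_comm]

lemma alphaZ_pow_succ_im (n : ℕ) :
    (alphaZ ^ (n + 1)).im = (alphaZ ^ n).re + 2 * (alphaZ ^ n).im := by
  rw [pow_succ, Zsqrtd.im_mul]
  simp [alphaZ, mul_comm]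

lemma two_pow_le_alphaZ_pow_re_and_im_nonneg (n : ℕ) :
    2 ^ n ≤ (alphaZ ^ n).re ∧ 0 ≤ (alphaZ ^ n).im := by
  induction n with
  | zero => simp
  | succ k ih =>
    rw [alphaZ_pow_succ_re, alphaZ_pow_succ_im, pow_succ]
    constructor <;> linarith [ih.1, ih.2, pow_pos (two_pos : (0 : ℤ) < 2) k]

lemma norm_alphaZ_pow (n : ℕ) : (alphaZ ^ n).norm = 2 ^ n := by
  induction n with
  | zero => simp
  | succ k ih => rw [pow_succ, Zsqrtd.norm_mul, ih, pow_succ]; rfl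

lemma norm_mers (n : ℕ) : (Mers n).norm = 2 * (alphaZ ^ n).re - 2 ^ n - 1 := by
  rw [← norm_alphaZ_pow, Mers, Zsqrtd.norm_mul]
  simp only [Zsqrtd.norm_def, Zsqrtd.re_sub, Zsqrtd.im_sub, Zsqrtd.re_one, Zsqrtd.im_one,
    Zsqrtd.re_sqrtd, Zsqrtd.im_sqrtd]
  ring

lemma strictMono_norm_mers : StrictMono fun n => (Mers n).norm := by
  refine strictMono_nat_of_lt_succ fun n => ?_
  obtain ⟨hre, him⟩ := two_pow_le_alphaZ_pow_re_and_im_nonneg n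
  rw [norm_mers, norm_mers, alphaZ_pow_succ_re, pow_succ]
  linarith [pow_pos (two_pos : (0 : ℤ) < 2) n]

lemma mers_dvd_mers {m n : ℕ} (h : m ∣ n) : Mers m ∣ Mers n :=
  mul_dvd_mul_right (dvd_pow_sub_one_of_dvd h) _

/-- **(Property 1 of `N(M_{p,α})`, §1).** If `n ≥ 2` and `N(M_{n,α})` is a rational
prime, then `n` is prime. -/
theorem nat_prime_of_norm_mersenne_prime (n : ℕ) (hn : 2 ≤ n)
    (hprime : Prime (Zsqrtd.norm (Mers n))) : Nat.Prime n :=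
  Nat.prime_of_prime_apply_of_strictMono strictMono_norm_mers (by decide)
    (fun h => map_dvd Zsqrtd.normMonoidHom (mers_dvd_mers h)) hn hprime
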